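/- There exists an absolute constant c₁ > 0 such that the following holds for every integer n ≥ 1, every ε ∈ (0,1), every distribution q over [n], and all distributions p₁,…,p_s over [n]: if s ≥ c₁·n·‖q‖₂/ε², each p_j satisfies ‖p_j − q‖₁ ≥ ε, and p₁,…,p_s satisfy the structural condition with respect to q, then letting λ_x = Σ_{j=1}^s p_j(x), letting (T_x)_{x∈[n]} and (Y_x)_{x∈[n]} be mutually independent random variables with T_x distributed Poisson(λ_x) and Y_x distributed Poisson(s·q(x)), and letting Z = Σ_{x∈[n]} ((T_x − Y_x)² − T_x − Y_x), it holds that Pr[Z < 5s²ε²/(8n)] ≤ 1/3. -/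

import Mathlib

open MeasureTheory ProbabilityTheory Finset

/-- A distribution over `[n]`: a nonnegative function summing to `1`. -/
def IsDist {n : ℕ} (p : Fin n → ℝ) : Prop :=
  (∀ x, 0 ≤ p x) ∧ ∑ x, p x = 1

/-- The structural condition: there is a set `A ⊆ [n]` such that every `p i` is at least `q`
on `A` and at most `q` on the complement of `A`. -/
def StructCond {n s : ℕ} (p : Fin s → Fin n → ℝ) (q : Fin n → ℝ) : Prop :=
  ∃ A : Finset (Fin n),
    (∀ (i : Fin s), ∀ x ∈ A, q x ≤ p i x) ∧ (∀ (i : Fin s), ∀ x ∉ A, p i x ≤ q x)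


noncomputable def pois (l : ℝ) (k : ℕ) : ℝ := Real.exp (-l) * l ^ k / (Nat.factorial k)

noncomputable def pmom (l : ℝ) : ℕ → ℝ
  | 0 => 1
  | 1 => l
  | 2 => l ^ 2 + l
  | 3 => l ^ 3 + 3 * l ^ 2 + l
  | 4 => l ^ 4 + 6 * l ^ 3 + 7 * l ^ 2 + l
  | _ => 0

lemma pois_nonneg {l : ℝ} (hl : 0 ≤ l) (k : ℕ) : 0 ≤ pois l k := by
  unfold pois; positivity

lemma pois_succ (l : ℝ) (k : ℕ) : pois l (k + 1) = l * pois l k / (k + 1) := by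
  unfold pois
  rw [Nat.factorial_succ]
  push_cast
  have h1 : ((k:ℝ) + 1) ≠ 0 := by positivity
  have h2 : ((Nat.factorial k : ℝ)) ≠ 0 := by positivity
  field_simp
  ring

lemma hasSum_pois {l : ℝ} (hl : 0 ≤ l) : HasSum (pois l) 1 := by
  have := poissonPMFRealSum l.toNNReal
  unfold poissonPMFReal at this
  exact (by simpa [Real.coe_toNNReal l hl] using this :
    HasSum (fun k : ℕ => Real.exp (-l) * l ^ k / (Nat.factorial k)) 1)

lemma hasSum_of_shift {f : ℕ → ℝ} {a : ℝ} (h0 : f 0 = 0)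
    (h : HasSum (fun k => f (k + 1)) a) : HasSum f a := by
  have := (hasSum_nat_add_iff (f := f) 1).mp h
  simpa [h0] using this

lemma hasSum_pois1 {l : ℝ} (hl : 0 ≤ l) :
    HasSum (fun k : ℕ => (k : ℝ) * pois l k) l := by
  apply hasSum_of_shift (by simp)
  have hfun : ∀ k : ℕ, ((k + 1 : ℕ) : ℝ) * pois l (k + 1) = l * pois l k := by
    intro k
    rw [pois_succ]; push_cast
    have h1 : ((k:ℝ) + 1) ≠ 0 := by positivity
    field_simp
  simp only [hfun]
  simpa using (hasSum_pois hl).mul_left l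

lemma hasSum_pois2 {l : ℝ} (hl : 0 ≤ l) :
    HasSum (fun k : ℕ => (k : ℝ) ^ 2 * pois l k) (l ^ 2 + l) := by
  apply hasSum_of_shift (by simp)
  have hfun : ∀ k : ℕ, ((k + 1 : ℕ) : ℝ) ^ 2 * pois l (k + 1)
      = l * ((k : ℝ) * pois l k) + l * pois l k := by
    intro k
    rw [pois_succ]; push_cast
    have h1 : ((k:ℝ) + 1) ≠ 0 := by positivity
    field_simp
  simp only [hfun]
  have := ((hasSum_pois1 hl).mul_left l).add ((hasSum_pois hl).mul_left l)
  convert this using 1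
  · rfl
  ring

lemma hasSum_pois3 {l : ℝ} (hl : 0 ≤ l) :
    HasSum (fun k : ℕ => (k : ℝ) ^ 3 * pois l k) (l ^ 3 + 3 * l ^ 2 + l) := by
  apply hasSum_of_shift (by simp)
  have hfun : ∀ k : ℕ, ((k + 1 : ℕ) : ℝ) ^ 3 * pois l (k + 1)
      = l * ((k : ℝ) ^ 2 * pois l k) + 2 * (l * ((k : ℝ) * pois l k)) + l * pois l k := by
    intro k
    rw [pois_succ]; push_cast
    have h1 : ((k:ℝ) + 1) ≠ 0 := by positivity
    field_simp; ring
  simp only [hfun]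
  have := (((hasSum_pois2 hl).mul_left l).add (((hasSum_pois1 hl).mul_left l).mul_left 2)).add
    ((hasSum_pois hl).mul_left l)
  convert this using 1
  · rfl
  ring

lemma hasSum_pois4 {l : ℝ} (hl : 0 ≤ l) :
    HasSum (fun k : ℕ => (k : ℝ) ^ 4 * pois l k) (l ^ 4 + 6 * l ^ 3 + 7 * l ^ 2 + l) := by
  apply hasSum_of_shift (by simp)
  have hfun : ∀ k : ℕ, ((k + 1 : ℕ) : ℝ) ^ 4 * pois l (k + 1)
      = l * ((k : ℝ) ^ 3 * pois l k) + 3 * (l * ((k : ℝ) ^ 2 * pois l k))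
        + 3 * (l * ((k : ℝ) * pois l k)) + l * pois l k := by
    intro k
    rw [pois_succ]; push_cast
    have h1 : ((k:ℝ) + 1) ≠ 0 := by positivity
    field_simp; ring
  simp only [hfun]
  have := ((((hasSum_pois3 hl).mul_left l).add
      (((hasSum_pois2 hl).mul_left l).mul_left 3)).add
      (((hasSum_pois1 hl).mul_left l).mul_left 3)).add ((hasSum_pois hl).mul_left l)
  convert this using 1
  · rfl
  ring

lemma hasSum_pois_pow {l : ℝ} (hl : 0 ≤ l) {a : ℕ} (ha : a ≤ 4) :
    HasSum (fun k : ℕ => (k : ℝ) ^ a * pois l k) (pmom l a) := by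
  interval_cases a
  · simpa [pmom] using hasSum_pois hl
  · simpa [pmom] using hasSum_pois1 hl
  · simpa [pmom] using hasSum_pois2 hl
  · simpa [pmom] using hasSum_pois3 hl
  · simpa [pmom] using hasSum_pois4 hl

lemma integral_discrete {ν : Measure ℕ} {l : ℝ} (hl : 0 ≤ l)
    (hν : ∀ k, ν {k} = ENNReal.ofReal (pois l k)) {g : ℕ → ℝ} (hg : ∀ k, 0 ≤ g k)
    {a : ℝ} (hsum : HasSum (fun k => g k * pois l k) a) :
    Integrable g ν ∧ ∫ k, g k ∂ν = a := by
  have hnn : ∀ k, 0 ≤ g k * pois l k := fun k => mul_nonneg (hg k) (pois_nonneg hl k)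
  have hint : Integrable g ν := by
    refine ⟨(measurable_of_countable g).aestronglyMeasurable, ?_⟩
    rw [HasFiniteIntegral, lintegral_countable' (fun k => (‖g k‖ₑ))]
    have : ∀ k : ℕ, (‖g k‖ₑ) * ν {k} = ENNReal.ofReal (g k * pois l k) := by
      intro k
      rw [hν k, Real.enorm_eq_ofReal (hg k), ← ENNReal.ofReal_mul (hg k)]
    simp only [this]
    rw [← ENNReal.ofReal_tsum_of_nonneg hnn hsum.summable]
    exact ENNReal.ofReal_lt_top
  refine ⟨hint, ?_⟩
  rw [integral_countable' hint]
  have : ∀ k : ℕ, ν.real {k} • g k = g k * pois l k := by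
    intro k
    rw [measureReal_def, hν k, ENNReal.toReal_ofReal (pois_nonneg hl k), smul_eq_mul, mul_comm]
  simp only [this]
  exact hsum.tsum_eq

lemma pois_moment {ν : Measure ℕ} {l : ℝ} (hl : 0 ≤ l)
    (hν : ∀ k, ν {k} = ENNReal.ofReal (pois l k)) {a : ℕ} (ha : a ≤ 4) :
    Integrable (fun k : ℕ => (k : ℝ) ^ a) ν ∧ ∫ k : ℕ, (k : ℝ) ^ a ∂ν = pmom l a :=
  integral_discrete hl hν (fun k => by positivity) (hasSum_pois_pow hl ha)

def evalMono (z : ℕ × ℕ) (e : ℝ × ℕ × ℕ) : ℝ := e.1 * ((z.1:ℝ) ^ e.2.1 * (z.2:ℝ) ^ e.2.2)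
def evalList (L : List (ℝ × ℕ × ℕ)) (z : ℕ × ℕ) : ℝ := (L.map (evalMono z)).sum
noncomputable def evalInt (lT lY : ℝ) (L : List (ℝ × ℕ × ℕ)) : ℝ :=
  (L.map (fun e => e.1 * (pmom lT e.2.1 * pmom lY e.2.2))).sum

variable {νT νY : Measure ℕ} [IsProbabilityMeasure νT] [IsProbabilityMeasure νY]
  {lT lY : ℝ}

lemma list_integral (hlT : 0 ≤ lT) (hlY : 0 ≤ lY)
    (hνT : ∀ k, νT {k} = ENNReal.ofReal (pois lT k))
    (hνY : ∀ k, νY {k} = ENNReal.ofReal (pois lY k))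
    (L : List (ℝ × ℕ × ℕ)) (hL : ∀ e ∈ L, e.2.1 ≤ 4 ∧ e.2.2 ≤ 4) :
    Integrable (evalList L) (νT.prod νY) ∧
      ∫ z, evalList L z ∂(νT.prod νY) = evalInt lT lY L := by
  induction L with
  | nil =>
    constructor
    · exact integrable_zero _ _ _
    · simp [evalList, evalInt]
  | cons e L ih =>
    obtain ⟨ihI, ihE⟩ := ih (fun e' he' => hL e' (List.mem_cons_of_mem _ he'))
    obtain ⟨ha, hb⟩ := hL e (List.mem_cons_self)
    obtain ⟨hIa, hEa⟩ := pois_moment hlT hνT ha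
    obtain ⟨hIb, hEb⟩ := pois_moment hlY hνY hb
    have hImono : Integrable (fun z : ℕ × ℕ => evalMono z e) (νT.prod νY) := by
      have := (hIa.mul_prod hIb).const_mul e.1
      exact this.congr (by simp [evalMono])
    have hEmono : ∫ z, evalMono z e ∂(νT.prod νY) = e.1 * (pmom lT e.2.1 * pmom lY e.2.2) := by
      have h1 : ∫ z, evalMono z e ∂(νT.prod νY)
          = e.1 * ∫ z : ℕ × ℕ, (z.1:ℝ) ^ e.2.1 * (z.2:ℝ) ^ e.2.2 ∂(νT.prod νY) := by
        rw [← integral_const_mul]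
        rfl
      have h2 := integral_prod_mul (μ := νT) (ν := νY)
        (f := fun k : ℕ => (k:ℝ) ^ e.2.1) (g := fun k : ℕ => (k:ℝ) ^ e.2.2)
      rw [h1, h2, hEa, hEb]
    have hsplit : evalList (e :: L) = fun z => evalMono z e + evalList L z := by
      funext z; simp [evalList]
    constructor
    · rw [hsplit]; exact hImono.add ihI
    · rw [hsplit, integral_add hImono ihI, hEmono, ihE]
      simp [evalInt]

noncomputable def Wfun : ℕ × ℕ → ℝ := fun z => ((z.1:ℝ) - z.2) ^ 2 - z.1 - z.2

def WL : List (ℝ × ℕ × ℕ) := [(1,2,0),(-2,1,1),(1,0,2),(-1,1,0),(-1,0,1)]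
def WL2 : List (ℝ × ℕ × ℕ) :=
  [(1,4,0),(-4,3,1),(6,2,2),(-4,1,3),(1,0,4),(-2,3,0),(2,2,1),(2,1,2),(-2,0,3),
   (1,2,0),(2,1,1),(1,0,2)]

lemma Wfun_eq : Wfun = evalList WL := by
  funext z; simp [Wfun, evalList, WL, evalMono]; ring

lemma Wfun_sq_eq : (fun z => Wfun z ^ 2) = evalList WL2 := by
  funext z; simp [Wfun, evalList, WL2, evalMono]; ring

lemma EW (hlT : 0 ≤ lT) (hlY : 0 ≤ lY)
    (hνT : ∀ k, νT {k} = ENNReal.ofReal (pois lT k))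
    (hνY : ∀ k, νY {k} = ENNReal.ofReal (pois lY k)) :
    Integrable Wfun (νT.prod νY) ∧ ∫ z, Wfun z ∂(νT.prod νY) = (lT - lY) ^ 2 := by
  obtain ⟨hI, hE⟩ := list_integral hlT hlY hνT hνY WL (by decide)
  rw [Wfun_eq]
  refine ⟨hI, ?_⟩
  rw [hE]
  simp [evalInt, WL, pmom, List.getD, List.getD_cons_succ, List.getD_cons_zero, List.getElem_cons_succ, List.getElem_cons_zero]
  ring

lemma EW2 (hlT : 0 ≤ lT) (hlY : 0 ≤ lY)
    (hνT : ∀ k, νT {k} = ENNReal.ofReal (pois lT k))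
    (hνY : ∀ k, νY {k} = ENNReal.ofReal (pois lY k)) :
    Integrable (fun z => Wfun z ^ 2) (νT.prod νY) ∧
      ∫ z, Wfun z ^ 2 ∂(νT.prod νY)
        = ((lT - lY) ^ 2) ^ 2 + (2 * (lT + lY) ^ 2 + 4 * (lT - lY) ^ 2 * (lT + lY)) := by
  obtain ⟨hI, hE⟩ := list_integral hlT hlY hνT hνY WL2 (by decide)
  rw [Wfun_sq_eq]
  refine ⟨hI, ?_⟩
  rw [hE]
  simp [evalInt, WL2, pmom, List.getD, List.getD_cons_succ, List.getD_cons_zero, List.getElem_cons_succ, List.getElem_cons_zero]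
  ring

lemma W_moments {Ω : Type} [MeasurableSpace Ω] (μ : Measure Ω) [IsProbabilityMeasure μ]
    (Tx Yx : Ω → ℕ) (hT : Measurable Tx) (hY : Measurable Yx) (hind : IndepFun Tx Yx μ)
    {lT lY : ℝ} (hlT : 0 ≤ lT) (hlY : 0 ≤ lY)
    (hpT : ∀ k, μ {ω | Tx ω = k} = ENNReal.ofReal (pois lT k))
    (hpY : ∀ k, μ {ω | Yx ω = k} = ENNReal.ofReal (pois lY k)) :
    (Integrable (fun ω => Wfun (Tx ω, Yx ω)) μ ∧
      ∫ ω, Wfun (Tx ω, Yx ω) ∂μ = (lT - lY) ^ 2) ∧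
    (Integrable (fun ω => Wfun (Tx ω, Yx ω) ^ 2) μ ∧
      ∫ ω, Wfun (Tx ω, Yx ω) ^ 2 ∂μ
        = ((lT - lY) ^ 2) ^ 2 + (2 * (lT + lY) ^ 2 + 4 * (lT - lY) ^ 2 * (lT + lY))) := by
  have hTY : Measurable (fun ω => (Tx ω, Yx ω)) := hT.prodMk hY
  haveI : IsProbabilityMeasure (μ.map Tx) := Measure.isProbabilityMeasure_map hT.aemeasurable
  haveI : IsProbabilityMeasure (μ.map Yx) := Measure.isProbabilityMeasure_map hY.aemeasurable
  have hmT : ∀ k, (μ.map Tx) {k} = ENNReal.ofReal (pois lT k) := by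
    intro k
    rw [Measure.map_apply hT (measurableSet_singleton k)]
    exact hpT k
  have hmY : ∀ k, (μ.map Yx) {k} = ENNReal.ofReal (pois lY k) := by
    intro k
    rw [Measure.map_apply hY (measurableSet_singleton k)]
    exact hpY k
  have hmap : μ.map (fun ω => (Tx ω, Yx ω)) = (μ.map Tx).prod (μ.map Yx) :=
    (indepFun_iff_map_prod_eq_prod_map_map hT.aemeasurable hY.aemeasurable).mp hind
  obtain ⟨hI1, hE1⟩ := EW hlT hlY hmT hmY
  obtain ⟨hI2, hE2⟩ := EW2 hlT hlY hmT hmY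
  rw [← hmap] at hI1 hE1 hI2 hE2
  have hWm : Measurable Wfun := measurable_of_countable _
  have hWm2 : Measurable (fun z => Wfun z ^ 2) := measurable_of_countable _
  constructor
  · constructor
    · exact (integrable_map_measure hWm.aestronglyMeasurable hTY.aemeasurable).mp hI1
    · rw [← integral_map hTY.aemeasurable hWm.aestronglyMeasurable, hE1]
  · constructor
    · exact (integrable_map_measure hWm2.aestronglyMeasurable hTY.aemeasurable).mp hI2
    · rw [← integral_map hTY.aemeasurable hWm2.aestronglyMeasurable, hE2]

lemma core {Ω : Type} [MeasurableSpace Ω] (μ : Measure Ω) [IsProbabilityMeasure μ] {n : ℕ}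
    (W : Fin n → Ω → ℝ) (d sg : Fin n → ℝ)
    (hWmeas : ∀ x, AEStronglyMeasurable (W x) μ)
    (hIW : ∀ x, Integrable (W x) μ)
    (hEW : ∀ x, ∫ ω, W x ω ∂μ = d x ^ 2)
    (hIW2 : ∀ x, Integrable (fun ω => W x ω ^ 2) μ)
    (hEW2 : ∀ x, ∫ ω, W x ω ^ 2 ∂μ = (d x ^ 2) ^ 2 + (2 * sg x ^ 2 + 4 * d x ^ 2 * sg x))
    (hWind : ∀ x y, x ≠ y → IndepFun (W x) (W y) μ) :
    MemLp (fun ω => ∑ x, W x ω) 2 μ ∧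
    ∫ ω, ∑ x, W x ω ∂μ = ∑ x, d x ^ 2 ∧
    variance (fun ω => ∑ x, W x ω) μ = ∑ x, (2 * sg x ^ 2 + 4 * d x ^ 2 * sg x) := by
  set Z : Ω → ℝ := fun ω => ∑ x, W x ω with hZdef
  have hZmeas : AEStronglyMeasurable Z μ := by
    apply Finset.aestronglyMeasurable_fun_sum
    intro x _
    exact hWmeas x
  have hIpair : ∀ x y : Fin n, Integrable (fun ω => W x ω * W y ω) μ := by
    intro x y
    by_cases hxy : x = y
    · subst hxy
      have : (fun ω => W x ω * W x ω) = fun ω => W x ω ^ 2 := by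
        funext ω; ring
      rw [this]; exact hIW2 x
    · exact (hWind x y hxy).integrable_mul (hIW x) (hIW y)
  have hEpair : ∀ x y : Fin n, x ≠ y →
      ∫ ω, W x ω * W y ω ∂μ = d x ^ 2 * d y ^ 2 := by
    intro x y hxy
    have := (hWind x y hxy).integral_fun_mul_eq_mul_integral (hWmeas x) (hWmeas y)
    have h2 : ∫ ω, W x ω * W y ω ∂μ = (∫ ω, W x ω ∂μ) * ∫ ω, W y ω ∂μ := this
    rw [h2, hEW x, hEW y]
  have hZsq : (fun ω => Z ω ^ 2) = fun ω => ∑ x, ∑ y, W x ω * W y ω := by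
    funext ω
    rw [hZdef]
    simp only
    rw [sq, Finset.sum_mul_sum]
  have hIZ2 : Integrable (fun ω => Z ω ^ 2) μ := by
    rw [hZsq]
    exact integrable_finset_sum _ fun x _ => integrable_finset_sum _ fun y _ => hIpair x y
  have hMem : MemLp Z 2 μ := (memLp_two_iff_integrable_sq hZmeas).mpr hIZ2
  have hEZ : ∫ ω, Z ω ∂μ = ∑ x, d x ^ 2 := by
    rw [hZdef]
    simp only
    rw [integral_finset_sum _ fun x _ => hIW x]
    exact Finset.sum_congr rfl fun x _ => hEW x
  refine ⟨hMem, hEZ, ?_⟩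
  have hEZ2 : ∫ ω, Z ω ^ 2 ∂μ = ∑ x, ∑ y,
      (if x = y then (d x ^ 2) ^ 2 + (2 * sg x ^ 2 + 4 * d x ^ 2 * sg x)
       else d x ^ 2 * d y ^ 2) := by
    rw [hZsq, integral_finset_sum _ fun x _ => integrable_finset_sum _ fun y _ => hIpair x y]
    refine Finset.sum_congr rfl fun x _ => ?_
    rw [integral_finset_sum _ fun y _ => hIpair x y]
    refine Finset.sum_congr rfl fun y _ => ?_
    by_cases hxy : x = y
    · subst hxy
      rw [if_pos rfl]
      have : (fun ω => W x ω * W x ω) = fun ω => W x ω ^ 2 := by funext ω; ring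
      rw [this, hEW2 x]
    · rw [if_neg hxy]
      exact hEpair x y hxy
  have hvd : variance Z μ = (∫ ω, Z ω ^ 2 ∂μ) - (∫ ω, Z ω ∂μ) ^ 2 := variance_eq_sub hMem
  rw [hvd, hEZ2, hEZ]
  have hsqsum : (∑ x, d x ^ 2) ^ 2 = ∑ x : Fin n, ∑ y : Fin n, d x ^ 2 * d y ^ 2 := by
    rw [sq, Finset.sum_mul_sum]
  rw [hsqsum, ← Finset.sum_sub_distrib]
  refine Finset.sum_congr rfl fun x _ => ?_
  rw [← Finset.sum_sub_distrib]
  rw [Finset.sum_eq_single_of_mem x (Finset.mem_univ x)]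
  · rw [if_pos rfl]; ring
  · intro y _ hyx
    rw [if_neg (Ne.symm hyx)]
    ring

lemma cheb {Ω : Type} [MeasurableSpace Ω] (μ : Measure Ω) [IsProbabilityMeasure μ]
    (Z : Ω → ℝ) (hMem : MemLp Z 2 μ) {m t : ℝ} (hEZ : ∫ ω, Z ω ∂μ = m)
    (ht : t ≤ 5 / 8 * m) (hm : 0 < m) (hvar : variance Z μ ≤ m ^ 2 / 64) :
    μ {ω | Z ω < t} ≤ 1 / 3 := by
  have hc : (0:ℝ) < 3 / 8 * m := by linarith
  have hcheb := meas_ge_le_variance_div_sq (μ := μ) hMem hc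
  have hsub : {ω | Z ω < t} ⊆ {ω | 3 / 8 * m ≤ |Z ω - μ[Z]|} := by
    intro ω hω
    simp only [Set.mem_setOf_eq] at *
    have hμZ : μ[Z] = m := hEZ
    rw [hμZ, abs_sub_comm]
    have h1 : 3 / 8 * m ≤ m - Z ω := by linarith
    exact le_trans h1 (le_abs_self _)
  calc μ {ω | Z ω < t} ≤ μ {ω | 3 / 8 * m ≤ |Z ω - μ[Z]|} := measure_mono hsub
    _ ≤ ENNReal.ofReal (variance Z μ / (3 / 8 * m) ^ 2) := hcheb
    _ ≤ ENNReal.ofReal (1 / 3) := by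
        apply ENNReal.ofReal_le_ofReal
        rw [div_le_iff₀ (by positivity)]
        nlinarith
    _ ≤ 1 / 3 := by
        rw [ENNReal.ofReal_div_of_pos (by norm_num)]
        simp [ENNReal.ofReal_one]

set_option maxHeartbeats 2000000 in
lemma arith_bounds {nR sR ε m B r Ssg Sdsg : ℝ}
    (hnR : 1 ≤ nR) (hs0 : 0 ≤ sR) (hε : 0 < ε) (hε1 : ε < 1)
    (hB0 : 0 ≤ B) (hr0 : 0 ≤ r) (hr2 : r ^ 2 = B) (hnB : 1 ≤ nR * B)
    (hs : 2000 * nR * r / ε ^ 2 ≤ sR)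
    (hCm : (sR * ε) ^ 2 ≤ nR * m) (hm0' : 0 ≤ m)
    (hsg_sq : Ssg ≤ 2 * m + 8 * sR ^ 2 * B)
    (hCS2 : Sdsg ^ 2 ≤ m ^ 2 * Ssg) (hSdsg0 : 0 ≤ Sdsg) (hSsg0 : 0 ≤ Ssg) :
    0 < m ∧ 2 * Ssg + 4 * Sdsg ≤ m ^ 2 / 64 ∧ 5 * sR ^ 2 * ε ^ 2 / (8 * nR) ≤ 5 / 8 * m := by
  have hnpos : (0:ℝ) < nR := by linarith
  have hε2pos : (0:ℝ) < ε ^ 2 := by positivity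
  have hε2le : ε ^ 2 ≤ 1 := by nlinarith
  have hsε2 : 2000 * nR * r ≤ sR * ε ^ 2 := by
    rw [div_le_iff₀ hε2pos] at hs
    linarith
  have hs_lb : 2000 * nR * r ≤ sR := by
    nlinarith [mul_le_mul_of_nonneg_left hε2le hs0, hsε2]
  have hm_lb1 : 2000 * r * sR ≤ m := by
    have h1 : nR * (2000 * r * sR) ≤ nR * m := by
      have h2 : sR * (2000 * nR * r) ≤ sR * (sR * ε ^ 2) :=
        mul_le_mul_of_nonneg_left hsε2 hs0
      nlinarith [hCm]
    exact le_of_mul_le_mul_left h1 hnpos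
  have hm_lb2 : 4000000 ≤ m := by
    have h1 : 2000 * r * (2000 * nR * r) ≤ 2000 * r * sR :=
      mul_le_mul_of_nonneg_left hs_lb (by positivity)
    nlinarith [hnB, hr2]
  have hm0 : 0 < m := by linarith
  have hsrm : (2000 * r * sR) ^ 2 ≤ m ^ 2 := pow_le_pow_left₀ (by positivity) hm_lb1 2
  have hsum_sg_le : Ssg ≤ (m / 400) ^ 2 := by
    have hB_eq : B = r ^ 2 := hr2.symm
    rw [hB_eq] at hsg_sq
    nlinarith [hsg_sq, hsrm, hm_lb2, hm0']
  have hsum_dsg : Sdsg ≤ m * (m / 400) := by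
    have h2 : Sdsg ^ 2 ≤ (m * (m / 400)) ^ 2 := by
      calc Sdsg ^ 2 ≤ m ^ 2 * Ssg := hCS2
        _ ≤ m ^ 2 * (m / 400) ^ 2 :=
            mul_le_mul_of_nonneg_left hsum_sg_le (sq_nonneg m)
        _ = (m * (m / 400)) ^ 2 := by ring
    exact (pow_le_pow_iff_left₀ hSdsg0 (by positivity) two_ne_zero).mp h2
  refine ⟨hm0, by nlinarith [hsum_sg_le, hsum_dsg, hm_lb2], ?_⟩
  rw [div_le_iff₀ (by positivity)]
  nlinarith [hCm]

/-- The soundness case of the correctness of the Closeness-Tester (Theorem 5.1):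
if each `p_j` is `ε`-far from `q` in `ℓ₁`, the `p_j` satisfy the structural condition
with respect to `q`, `s ≥ c₁·n·‖q‖₂/ε²`, and `T x ~ Poisson(λ_x)` with `λ_x = Σ_j p_j(x)`
and `Y x ~ Poisson(s·q(x))` are all mutually independent, then the statistic
`Z = Σ_x ((T_x − Y_x)² − T_x − Y_x)` falls below `5s²ε²/(8n)` with probability at
most `1/3`. -/
theorem closeness_tester_soundness :
    ∃ c₁ : ℝ, 0 < c₁ ∧
      ∀ (n : ℕ), 1 ≤ n → ∀ ε : ℝ, 0 < ε → ε < 1 →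
      ∀ q : Fin n → ℝ, IsDist q →
      ∀ (s : ℕ) (p : Fin s → Fin n → ℝ),
        c₁ * n * Real.sqrt (∑ x, q x ^ 2) / ε ^ 2 ≤ (s : ℝ) →
        (∀ j, IsDist (p j)) →
        (∀ j, ∑ x, |p j x - q x| ≥ ε) →
        StructCond p q →
      ∀ (Ω : Type) [MeasurableSpace Ω] (μ : Measure Ω) [IsProbabilityMeasure μ],
      ∀ T Y : Fin n → Ω → ℕ,
        (∀ x, Measurable (T x)) → (∀ x, Measurable (Y x)) →
        iIndepFun (Sum.elim T Y) μ →
        (∀ (x : Fin n) (k : ℕ), μ {ω | T x ω = k}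
          = ENNReal.ofReal
              (Real.exp (-(∑ j, p j x)) * (∑ j, p j x) ^ k / (Nat.factorial k))) →
        (∀ (x : Fin n) (k : ℕ), μ {ω | Y x ω = k}
          = ENNReal.ofReal (Real.exp (-(s * q x)) * (s * q x) ^ k / (Nat.factorial k))) →
        μ {ω | ∑ x, (((T x ω : ℝ) - Y x ω) ^ 2 - T x ω - Y x ω)
            < 5 * (s : ℝ) ^ 2 * ε ^ 2 / (8 * n)} ≤ 1 / 3 := by
  refine ⟨2000, by norm_num, ?_⟩
  intro n hn ε hε hε1 q hq s p hs hp hpq hstruct Ω _ μ _ T Y hTmeas hYmeas hIndep hTpmf hYpmf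
  have hnR : (1:ℝ) ≤ (n:ℝ) := by exact_mod_cast hn
  have hnpos : (0:ℝ) < (n:ℝ) := lt_of_lt_of_le one_pos hnR
  have hs0 : (0:ℝ) ≤ (s:ℝ) := Nat.cast_nonneg s
  -- parameters
  set lam : Fin n → ℝ := fun x => ∑ j, p j x with hlam_def
  set mq : Fin n → ℝ := fun x => (s:ℝ) * q x with hmq_def
  set d : Fin n → ℝ := fun x => lam x - mq x with hd_def
  set sg : Fin n → ℝ := fun x => lam x + mq x with hsg_def
  have hlam0 : ∀ x, 0 ≤ lam x := fun x => Finset.sum_nonneg fun j _ => (hp j).1 x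
  have hmq0 : ∀ x, 0 ≤ mq x := fun x => mul_nonneg hs0 (hq.1 x)
  have hsg0 : ∀ x, 0 ≤ sg x := fun x => add_nonneg (hlam0 x) (hmq0 x)
  have hT' : ∀ x k, μ {ω | T x ω = k} = ENNReal.ofReal (pois (lam x) k) := fun x k => hTpmf x k
  have hY' : ∀ x k, μ {ω | Y x ω = k} = ENNReal.ofReal (pois (mq x) k) := fun x k => hYpmf x k
  -- the W random variables
  set W : Fin n → Ω → ℝ := fun x ω => Wfun (T x ω, Y x ω) with hW_def
  have hindTY : ∀ x, IndepFun (T x) (Y x) μ := fun x =>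
    hIndep.indepFun (show (Sum.inl x : Fin n ⊕ Fin n) ≠ Sum.inr x by simp)
  have hWm : ∀ x, (Integrable (W x) μ ∧ ∫ ω, W x ω ∂μ = (lam x - mq x) ^ 2) ∧
      (Integrable (fun ω => W x ω ^ 2) μ ∧ ∫ ω, W x ω ^ 2 ∂μ
        = ((lam x - mq x) ^ 2) ^ 2 + (2 * (lam x + mq x) ^ 2
            + 4 * (lam x - mq x) ^ 2 * (lam x + mq x))) := fun x =>
    W_moments μ (T x) (Y x) (hTmeas x) (hYmeas x) (hindTY x) (hlam0 x) (hmq0 x) (hT' x) (hY' x)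
  have hSumMeas : ∀ i : Fin n ⊕ Fin n, Measurable (Sum.elim T Y i) := by
    rintro (i | i)
    exacts [hTmeas i, hYmeas i]
  have hWind : ∀ x y, x ≠ y → IndepFun (W x) (W y) μ := by
    intro x y hxy
    have hpair := hIndep.indepFun_prodMk_prodMk hSumMeas
      (Sum.inl x) (Sum.inr x) (Sum.inl y) (Sum.inr y)
      (by simp [hxy]) (by simp) (by simp) (by simp [hxy])
    exact hpair.comp (measurable_of_countable Wfun) (measurable_of_countable Wfun)
  have hWmeas : ∀ x, AEStronglyMeasurable (W x) μ := fun x =>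
    ((measurable_of_countable Wfun).comp ((hTmeas x).prodMk (hYmeas x))).aestronglyMeasurable
  obtain ⟨hMem, hEZ, hVar⟩ := core μ W d sg hWmeas (fun x => (hWm x).1.1)
    (fun x => (hWm x).1.2) (fun x => (hWm x).2.1) (fun x => (hWm x).2.2) hWind
  -- arithmetic setup
  set B : ℝ := ∑ x, q x ^ 2 with hB_def
  set r : ℝ := Real.sqrt B with hr_def
  set m : ℝ := ∑ x, d x ^ 2 with hm_def
  have hB0 : 0 ≤ B := Finset.sum_nonneg fun x _ => sq_nonneg _
  have hr0 : 0 ≤ r := Real.sqrt_nonneg B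
  have hr2 : r ^ 2 = B := Real.sq_sqrt hB0
  have hnB : 1 ≤ (n:ℝ) * B := by
    have h := Finset.sum_mul_sq_le_sq_mul_sq Finset.univ (fun _ : Fin n => (1:ℝ)) q
    simpa [hq.2, Finset.card_univ] using h
  -- ℓ¹ lower bound from structure
  obtain ⟨A, hA1, hA2⟩ := hstruct
  have hδeq : ∀ x, d x = ∑ j, (p j x - q x) := by
    intro x
    rw [hd_def]
    simp only [hlam_def, hmq_def]
    rw [Finset.sum_sub_distrib, Finset.sum_const, Finset.card_univ, Fintype.card_fin,
      nsmul_eq_mul]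
  have hd_sum : ∀ x, |d x| = ∑ j, |p j x - q x| := by
    intro x
    by_cases hx : x ∈ A
    · rw [hδeq x, abs_of_nonneg (Finset.sum_nonneg fun j _ => sub_nonneg.mpr (hA1 j x hx))]
      exact Finset.sum_congr rfl fun j _ =>
        (abs_of_nonneg (sub_nonneg.mpr (hA1 j x hx))).symm
    · rw [hδeq x, abs_of_nonpos (Finset.sum_nonpos fun j _ => sub_nonpos.mpr (hA2 j x hx)),
        ← Finset.sum_neg_distrib]
      exact Finset.sum_congr rfl fun j _ =>
        (abs_of_nonpos (sub_nonpos.mpr (hA2 j x hx))).symm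
  have hl1 : (s:ℝ) * ε ≤ ∑ x, |d x| := by
    calc (s:ℝ) * ε = ∑ _j : Fin s, ε := by
          rw [Finset.sum_const, Finset.card_univ, Fintype.card_fin, nsmul_eq_mul]
      _ ≤ ∑ j : Fin s, ∑ x, |p j x - q x| := Finset.sum_le_sum fun j _ => hpq j
      _ = ∑ x, ∑ j : Fin s, |p j x - q x| := Finset.sum_comm
      _ = ∑ x, |d x| := Finset.sum_congr rfl fun x _ => (hd_sum x).symm
  have hCm : ((s:ℝ) * ε) ^ 2 ≤ (n:ℝ) * m := by
    have h := Finset.sum_mul_sq_le_sq_mul_sq Finset.univ (fun _ : Fin n => (1:ℝ))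
      (fun x => |d x|)
    simp only [one_pow, one_mul, Finset.sum_const, Finset.card_univ, Fintype.card_fin,
      nsmul_eq_mul, mul_one, sq_abs] at h
    have h2 : ((s:ℝ) * ε) ^ 2 ≤ (∑ x, |d x|) ^ 2 :=
      pow_le_pow_left₀ (by positivity) hl1 2
    exact le_trans h2 h
  have hm0' : 0 ≤ m := Finset.sum_nonneg fun x _ => sq_nonneg _
  -- sum of squares of sg
  set Ssg : ℝ := ∑ x, sg x ^ 2 with hSsg_def
  set Sdsg : ℝ := ∑ x, d x ^ 2 * sg x with hSdsg_def
  have hSsg0 : 0 ≤ Ssg := Finset.sum_nonneg fun x _ => sq_nonneg _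
  have hSdsg0 : 0 ≤ Sdsg :=
    Finset.sum_nonneg fun x _ => mul_nonneg (sq_nonneg _) (hsg0 x)
  have hsg_sq : Ssg ≤ 2 * m + 8 * (s:ℝ) ^ 2 * B := by
    have hpt : ∀ x, sg x ^ 2 ≤ 2 * d x ^ 2 + 8 * ((s:ℝ) * q x) ^ 2 := by
      intro x
      have hsgd : sg x = d x + 2 * ((s:ℝ) * q x) := by
        rw [hsg_def, hd_def]; simp only [hmq_def]; ring
      rw [hsgd]
      nlinarith [sq_nonneg (d x - 2 * ((s:ℝ) * q x))]
    calc Ssg ≤ ∑ x, (2 * d x ^ 2 + 8 * ((s:ℝ) * q x) ^ 2) :=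
          Finset.sum_le_sum fun x _ => hpt x
      _ = ∑ x, 2 * d x ^ 2 + ∑ x, 8 * (s:ℝ) ^ 2 * q x ^ 2 := by
          rw [Finset.sum_add_distrib]
          congr 1
          exact Finset.sum_congr rfl fun x _ => by ring
      _ = 2 * m + 8 * (s:ℝ) ^ 2 * B := by
          rw [← Finset.mul_sum, ← Finset.mul_sum, hm_def, hB_def]
  have hCS2 : Sdsg ^ 2 ≤ m ^ 2 * Ssg := by
    have hCS := Finset.sum_mul_sq_le_sq_mul_sq Finset.univ (fun x => d x ^ 2) sg
    have hd4 : ∑ x, (d x ^ 2) ^ 2 ≤ m ^ 2 := by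
      have := Finset.sum_sq_le_sq_sum_of_nonneg
        (s := Finset.univ) (f := fun x => d x ^ 2) (fun x _ => sq_nonneg (d x))
      rw [hm_def]
      exact this
    calc Sdsg ^ 2 ≤ (∑ x, (d x ^ 2) ^ 2) * Ssg := hCS
      _ ≤ m ^ 2 * Ssg := mul_le_mul_of_nonneg_right hd4 hSsg0
  obtain ⟨hm0, hvarsum, ht⟩ := arith_bounds hnR hs0 hε hε1 hB0 hr0 hr2 hnB hs hCm hm0'
    hsg_sq hCS2 hSdsg0 hSsg0
  have hVarBound : variance (fun ω => ∑ x, W x ω) μ ≤ m ^ 2 / 64 := by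
    rw [hVar]
    have hsplit : ∑ x, (2 * sg x ^ 2 + 4 * d x ^ 2 * sg x)
        = 2 * Ssg + 4 * Sdsg := by
      rw [hSsg_def, hSdsg_def, Finset.mul_sum, Finset.mul_sum, ← Finset.sum_add_distrib]
      exact Finset.sum_congr rfl fun x _ => by ring
    rw [hsplit]
    exact hvarsum
  have hgoal : {ω : Ω | ∑ x, (((T x ω : ℝ) - Y x ω) ^ 2 - T x ω - Y x ω)
      < 5 * (s:ℝ) ^ 2 * ε ^ 2 / (8 * n)}
      = {ω : Ω | (∑ x, W x ω) < 5 * (s:ℝ) ^ 2 * ε ^ 2 / (8 * n)} := by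
    apply Set.ext
    intro ω
    simp only [Set.mem_setOf_eq, hW_def, Wfun]
  rw [hgoal]
  exact cheb μ (fun ω => ∑ x, W x ω) hMem hEZ ht hm0 hVarBound
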